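/- For the picture cube puzzle group, the subgroup H of S_4^{m×n} generated by the row moves (right multiplication of a row by u = (1 4 2 3) or d = (1 3 2 4)) and column moves (right multiplication of a column by l = (1 3 4 2) or r = (1 2 4 3)) has order 2^{m+n-1} · 12^{mn}. -/

import Mathlib

def rowMove {G : Type*} [Group G] (m n : ℕ) (r : G) (i : Fin m) : Fin m → Fin n → G :=
  fun i' _ => if i' = i then r else 1

def colMove {G : Type*} [Group G] (m n : ℕ) (c : G) (j : Fin n) : Fin m → Fin n → G :=
  fun _ j' => if j' = j then c else 1

def cubeU : Equiv.Perm (Fin 4) := c[(0 : Fin 4), 3, 1, 2]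
def cubeD : Equiv.Perm (Fin 4) := c[(0 : Fin 4), 2, 1, 3]
def cubeL : Equiv.Perm (Fin 4) := c[(0 : Fin 4), 2, 3, 1]
def cubeR : Equiv.Perm (Fin 4) := c[(0 : Fin 4), 1, 3, 2]

def cubeMoves (m n : ℕ) : Set (Fin m → Fin n → Equiv.Perm (Fin 4)) :=
  {f | ∃ i, f = rowMove m n cubeU i ∨ f = rowMove m n cubeD i} ∪
  {f | ∃ j, f = colMove m n cubeL j ∨ f = colMove m n cubeR j}

/-!
Write `σ f = (sign (f i j))ᵢⱼ` for the sign grid of `f`. Every move is a row or a column of odd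
permutations, so every element of the group has a rank-one sign grid `σ f i j = ε i * δ j`.
Conversely, the commutator of the row move `u` at `i` with a column move `c` at `j` is `⁅u, c⁆` in
the cell `(i, j)` and `1` elsewhere, and `⁅u, r⁆`, `⁅u, l⁆` generate `A₄`; so the group contains
`ker σ`. Since row and column moves realise every rank-one sign grid, the group is the preimage
under `σ` of the rank-one grids. As `σ` is onto, its order is `|ker σ| = 12 ^ (m * n)` times the
number `2 ^ (m + n - 1)` of rank-one grids, because `(ε, δ)` and `(c ε, c⁻¹ δ)` give the same grid.
-/

open scoped commutatorElement

theorem Subgroup.card_comap_mul_card_of_surjective {G K : Type*} [Group G] [Group K]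
    {f : G →* K} (hf : Function.Surjective f) (P : Subgroup K) :
    Nat.card (P.comap f) * Nat.card K = Nat.card G * Nat.card P := by
  rw [← P.card_mul_index, ← (P.comap f).card_mul_index, P.index_comap_of_surjective hf]
  ring

theorem MonoidHom.ker_compLeft {G K : Type*} [Group G] [Group K] (φ : G →* K) (ι : Type*) :
    (φ.compLeft ι).ker = Subgroup.pi Set.univ fun _ => φ.ker := by
  ext f
  simp [Subgroup.mem_pi, funext_iff]

section OuterMul

variable (M ι κ : Type*) [CommGroup M]

def outerMulHom : (ι → M) × (κ → M) →* (ι → κ → M) where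
  toFun p i j := p.1 i * p.2 j
  map_one' := by ext; simp
  map_mul' p q := by ext; simp [mul_mul_mul_comm]

theorem card_ker_outerMulHom [Nonempty ι] [Nonempty κ] :
    Nat.card (outerMulHom M ι κ).ker = Nat.card M := by
  obtain ⟨i₀⟩ := ‹Nonempty ι›
  obtain ⟨j₀⟩ := ‹Nonempty κ›
  let const : M → (outerMulHom M ι κ).ker := fun a =>
    ⟨(fun _ => a, fun _ => a⁻¹), by ext; simp [outerMulHom]⟩
  refine (Nat.card_eq_of_bijective const ⟨fun a b h => ?_, fun ⟨⟨ε, δ⟩, hp⟩ => ⟨ε i₀, ?_⟩⟩).symm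
  · simpa [const] using congr_arg (fun p => p.1.1 i₀) h
  · have hεδ : ∀ i j, ε i = (δ j)⁻¹ := fun i j =>
      eq_inv_of_mul_eq_one_left (congr_fun (congr_fun hp i) j)
    refine Subtype.ext (Prod.ext (funext fun i => ?_) (funext fun j => ?_))
    · simp [const, hεδ i₀ j₀, hεδ i j₀]
    · simp [const, hεδ i₀ j]

theorem card_range_outerMulHom_mul_card [Nonempty ι] [Nonempty κ] :
    Nat.card (outerMulHom M ι κ).range * Nat.card M = Nat.card ((ι → M) × (κ → M)) := by
  rw [← card_ker_outerMulHom M ι κ, ← Subgroup.index_ker, mul_comm, Subgroup.card_mul_index]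

end OuterMul

section Moves

variable (m n : ℕ)

theorem rowMove_one {G : Type*} [Group G] (i : Fin m) : rowMove m n (1 : G) i = 1 := by
  funext i' j'
  simp [rowMove]

theorem colMove_one {G : Type*} [Group G] (j : Fin n) : colMove m n (1 : G) j = 1 := by
  funext i' j'
  simp [colMove]

theorem commutatorElement_rowMove_colMove {G : Type*} [Group G] (x y : G) (i : Fin m)
    (j : Fin n) : ⁅rowMove m n x i, colMove m n y j⁆ = Pi.mulSingle i (Pi.mulSingle j ⁅x, y⁆) := by
  funext i' j'
  by_cases hi : i' = i <;> by_cases hj : j' = j <;>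
    simp [rowMove, colMove, commutatorElement_def, hi, hj]

theorem compLeft_compLeft_rowMove {G K : Type*} [Group G] [Group K] (φ : G →* K) (x : G)
    (i : Fin m) :
    (φ.compLeft (Fin n)).compLeft (Fin m) (rowMove m n x i) = rowMove m n (φ x) i := by
  funext i' j'
  by_cases hi : i' = i <;> simp [rowMove, hi]

theorem compLeft_compLeft_colMove {G K : Type*} [Group G] [Group K] (φ : G →* K) (x : G)
    (j : Fin n) :
    (φ.compLeft (Fin n)).compLeft (Fin m) (colMove m n x j) = colMove m n (φ x) j := by
  funext i' j'
  by_cases hj : j' = j <;> simp [colMove, hj]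

variable {M : Type*} [CommGroup M]

theorem rowMove_mem_range_outerMulHom (a : M) (i : Fin m) :
    rowMove m n a i ∈ (outerMulHom M (Fin m) (Fin n)).range :=
  ⟨(Pi.mulSingle i a, 1), by funext i' j'; by_cases hi : i' = i <;> simp [outerMulHom, rowMove, hi]⟩

theorem colMove_mem_range_outerMulHom (a : M) (j : Fin n) :
    colMove m n a j ∈ (outerMulHom M (Fin m) (Fin n)).range :=
  ⟨(1, Pi.mulSingle j a), by funext i' j'; by_cases hj : j' = j <;> simp [outerMulHom, colMove, hj]⟩

theorem outerMulHom_apply_eq_prod (ε : Fin m → M) (δ : Fin n → M) :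
    outerMulHom M (Fin m) (Fin n) (ε, δ) =
      (∏ i, rowMove m n (ε i) i) * ∏ j, colMove m n (δ j) j := by
  funext i j
  simp [outerMulHom, rowMove, colMove, Finset.prod_apply]

theorem range_outerMulHom_le {J : Subgroup (Fin m → Fin n → M)}
    (hrow : ∀ a i, rowMove m n a i ∈ J) (hcol : ∀ a j, colMove m n a j ∈ J) :
    (outerMulHom M (Fin m) (Fin n)).range ≤ J := by
  rintro _ ⟨⟨ε, δ⟩, rfl⟩
  rw [outerMulHom_apply_eq_prod]
  exact J.mul_mem (J.prod_mem fun i _ => hrow _ i) (J.prod_mem fun j _ => hcol _ j)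

end Moves

theorem sign_cubeU : Equiv.Perm.sign cubeU = -1 := by decide

theorem sign_cubeR : Equiv.Perm.sign cubeR = -1 := by decide

set_option maxRecDepth 10000 in
theorem exists_eq_cubeCommutator_word (x : Equiv.Perm (Fin 4))
    (hx : x ∈ alternatingGroup (Fin 4)) :
    ∃ i j k : Fin 3,
      x = ⁅cubeU, cubeR⁆ ^ (i : ℕ) * ⁅cubeU, cubeL⁆ ^ (j : ℕ) * ⁅cubeU, cubeR⁆ ^ (k : ℕ) := by
  rw [Equiv.Perm.mem_alternatingGroup] at hx
  revert x
  decide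

theorem alternatingGroup_le_of_cubeCommutators_mem {K : Subgroup (Equiv.Perm (Fin 4))}
    (hR : ⁅cubeU, cubeR⁆ ∈ K) (hL : ⁅cubeU, cubeL⁆ ∈ K) : alternatingGroup (Fin 4) ≤ K := by
  intro x hx
  obtain ⟨i, j, k, rfl⟩ := exists_eq_cubeCommutator_word x hx
  exact K.mul_mem (K.mul_mem (K.pow_mem hR _) (K.pow_mem hL _)) (K.pow_mem hR _)

section CubeGroup

variable (m n : ℕ)

abbrev cubeSigns : (Fin m → Fin n → Equiv.Perm (Fin 4)) →* (Fin m → Fin n → ℤˣ) :=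
  (Equiv.Perm.sign.compLeft (Fin n)).compLeft (Fin m)

theorem cubeSigns_surjective : Function.Surjective (cubeSigns m n) :=
  (Equiv.Perm.sign_surjective (Fin 4)).comp_left.comp_left

theorem ker_cubeSigns_le_closure : (cubeSigns m n).ker ≤ Subgroup.closure (cubeMoves m n) := by
  rw [MonoidHom.ker_compLeft, Subgroup.pi_le_iff]
  intro i
  rw [Subgroup.map_le_iff_le_comap, MonoidHom.ker_compLeft, Subgroup.pi_le_iff]
  intro j
  rw [Subgroup.map_le_iff_le_comap]
  have hU : rowMove m n cubeU i ∈ Subgroup.closure (cubeMoves m n) :=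
    Subgroup.subset_closure (.inl ⟨i, .inl rfl⟩)
  have hcomm : ∀ c, colMove m n c j ∈ Subgroup.closure (cubeMoves m n) →
      Pi.mulSingle i (Pi.mulSingle j ⁅cubeU, c⁆) ∈ Subgroup.closure (cubeMoves m n) := by
    intro c hc
    rw [← commutatorElement_rowMove_colMove, commutatorElement_def]
    exact mul_mem (mul_mem (mul_mem hU hc) (inv_mem hU)) (inv_mem hc)
  exact alternatingGroup_le_of_cubeCommutators_mem
    (hcomm _ (Subgroup.subset_closure (.inr ⟨j, .inr rfl⟩)))
    (hcomm _ (Subgroup.subset_closure (.inr ⟨j, .inl rfl⟩)))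

theorem range_outerMulHom_le_map_closure :
    (outerMulHom ℤˣ (Fin m) (Fin n)).range ≤
      (Subgroup.closure (cubeMoves m n)).map (cubeSigns m n) := by
  apply range_outerMulHom_le
  · intro a i
    rcases Int.units_eq_one_or a with rfl | rfl
    · rw [rowMove_one]; exact one_mem _
    · rw [← sign_cubeU, ← compLeft_compLeft_rowMove]
      exact Subgroup.mem_map_of_mem _ (Subgroup.subset_closure (.inl ⟨i, .inl rfl⟩))
  · intro a j
    rcases Int.units_eq_one_or a with rfl | rfl
    · rw [colMove_one]; exact one_mem _
    · rw [← sign_cubeR, ← compLeft_compLeft_colMove]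
      exact Subgroup.mem_map_of_mem _ (Subgroup.subset_closure (.inr ⟨j, .inr rfl⟩))

theorem closure_cubeMoves_le_comap :
    Subgroup.closure (cubeMoves m n) ≤
      (outerMulHom ℤˣ (Fin m) (Fin n)).range.comap (cubeSigns m n) := by
  rw [Subgroup.closure_le]
  rintro f (⟨i, rfl | rfl⟩ | ⟨j, rfl | rfl⟩) <;>
  simp only [SetLike.mem_coe, Subgroup.mem_comap, compLeft_compLeft_rowMove,
    compLeft_compLeft_colMove, rowMove_mem_range_outerMulHom, colMove_mem_range_outerMulHom]

theorem closure_cubeMoves_eq :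
    Subgroup.closure (cubeMoves m n) =
      (outerMulHom ℤˣ (Fin m) (Fin n)).range.comap (cubeSigns m n) := by
  refine le_antisymm (closure_cubeMoves_le_comap m n) ?_
  calc _ ≤ ((Subgroup.closure (cubeMoves m n)).map (cubeSigns m n)).comap (cubeSigns m n) :=
        Subgroup.comap_mono (range_outerMulHom_le_map_closure m n)
    _ = Subgroup.closure (cubeMoves m n) := by
        rw [Subgroup.comap_map_eq, sup_eq_left.mpr (ker_cubeSigns_le_closure m n)]

end CubeGroup

theorem cube_puzzle_group_order (m n : ℕ) (hm : 0 < m) (hn : 0 < n) :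
    Nat.card (Subgroup.closure (cubeMoves m n)) = 2 ^ (m + n - 1) * 12 ^ (m * n) := by
  have : Nonempty (Fin m) := ⟨⟨0, hm⟩⟩
  have : Nonempty (Fin n) := ⟨⟨0, hn⟩⟩
  have hpatterns_mul := card_range_outerMulHom_mul_card ℤˣ (Fin m) (Fin n)
  have hcard := Subgroup.card_comap_mul_card_of_surjective (cubeSigns_surjective m n)
    (outerMulHom ℤˣ (Fin m) (Fin n)).range
  rw [← closure_cubeMoves_eq] at hcard
  have h2 : Nat.card ℤˣ = 2 := by rw [Nat.card_eq_fintype_card, Fintype.card_units_int]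
  simp only [Nat.card_prod, Nat.card_fun, Nat.card_perm, h2, Nat.card_fin] at hpatterns_mul hcard
  have hpatterns : Nat.card (outerMulHom ℤˣ (Fin m) (Fin n)).range = 2 ^ (m + n - 1) := by
    refine Nat.eq_of_mul_eq_mul_right two_pos ?_
    rw [hpatterns_mul, ← pow_succ, ← pow_add, Nat.sub_add_cancel (by omega)]
  refine Nat.eq_of_mul_eq_mul_right (by positivity : 0 < (2 ^ n) ^ m) ?_
  rw [hcard, hpatterns, show Nat.factorial 4 = 12 * 2 from rfl, mul_pow, mul_pow]
  ring
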